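/- Let n, k be integers with 1 ≤ k < n, K = {p ∈ [0,1]^n : Σ_i p_i = k}, and U ⊆ {1,…,n} with |U| = k. Then the function f̄_U is polynomially bounded on K. -/

import Mathlib

open Finset

def cube (n : ℕ) : Set (Fin n → ℝ) := {p | ∀ i, 0 ≤ p i ∧ p i ≤ 1}

/-- The open face `F_{A,S,B}` of the hypercube, where `S` is the complement of `A ∪ B`. -/
def face {n : ℕ} (A B : Finset (Fin n)) : Set (Fin n → ℝ) :=
  {p | (∀ i ∈ A, p i = 0) ∧ (∀ i ∈ B, p i = 1) ∧ ∀ i ∉ A ∪ B, 0 < p i ∧ p i < 1}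

/-- `(1-p)^A · (p(1-p))^S · p^B` for the face `F_{A,S,B}`. -/
noncomputable def facePoly {n : ℕ} (A B : Finset (Fin n)) (p : Fin n → ℝ) : ℝ :=
  (∏ i ∈ A, (1 - p i)) * (∏ i ∈ (A ∪ B)ᶜ, p i * (1 - p i)) * (∏ i ∈ B, p i)
/-- A function `f : K → [0,1]` is polynomially bounded on the compact subdomain `K`. -/
def PolyBoundedOn {n : ℕ} (K : Set (Fin n → ℝ)) (f : (Fin n → ℝ) → ℝ) : Prop :=
  ∃ (m : ℕ) (c : ℝ), 0 < c ∧ ∀ A B : Finset (Fin n), Disjoint A B →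
    (∃ q ∈ K ∩ face A B, 0 < f q) →
    ∀ p ∈ K, c * facePoly A B p ^ m ≤ f p
/-- The domain `K = {p ∈ [0,1]^n : ∑ i, p i = k}`. -/
def Ksimplex (n k : ℕ) : Set (Fin n → ℝ) :=
  {p | (∀ i, 0 ≤ p i ∧ p i ≤ 1) ∧ ∑ i, p i = (k : ℝ)}

/-- `g_U(x) = (1/(n-k)) · ∏_{i∈U} x_i · ∏_{i∉U} (1-x_i) · ∑_{i∉U} x_i`. -/
noncomputable def gSampford (n k : ℕ) (U : Finset (Fin n)) (x : Fin n → ℝ) : ℝ :=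
  (1 / ((n : ℝ) - (k : ℝ))) * (∏ i ∈ U, x i) * (∏ i ∈ Uᶜ, (1 - x i)) * (∑ i ∈ Uᶜ, x i)

/-- `∑_{V ⊆ [n], |V| = k} g_V(x)`. -/
noncomputable def sumg (n k : ℕ) (x : Fin n → ℝ) : ℝ :=
  ∑ V ∈ Finset.powersetCard k (Finset.univ : Finset (Fin n)), gSampford n k V x

/-- The indicator vector `e_U` of a subset `U`. -/
def eU {n : ℕ} (U : Finset (Fin n)) : Fin n → ℝ := fun i => if i ∈ U then 1 else 0
open Classical in
/-- The continuous completion `f̄_U` of `f_U = g_U / ∑_V g_V` on `K`. -/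
noncomputable def fbar (n k : ℕ) (U : Finset (Fin n)) (x : Fin n → ℝ) : ℝ :=
  if x = eU U then 1
  else if ∃ V : Finset (Fin n), V.card = k ∧ x = eU V then 0
  else gSampford n k U x / sumg n k x

/-!
Write `h_U(p) = ∏_{i ∈ U} p_i ∏_{i ∉ U} (1 - p_i)` (`poissonWeight`), so that
`g_U = h_U · ∑_{i ∉ U} p_i / (n - k)`. For `V ≠ U` pick `j ∈ V \ U`; then
`g_V ≤ k p_j / (n - k) ≤ k ∑_{i ∉ U} p_i / (n - k)`, hence `h_U · g_V ≤ k g_U`.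
Summing over the `C(n, k)` sets `V` gives `h_U ≤ C(n, k) k f̄_U` on `K`.
If `f̄_U` is positive at a point of the face `F_{A,S,B}`, then `h_U` is positive there, which
forces `A ∩ U = ∅` and `B ⊆ U`; each factor of the face polynomial is then at most the
corresponding factor of `h_U`, so the bound holds with `m = 1` and `c = 1 / (C(n, k) k)`.
-/

/-- The probability that independent coin flips with biases `p i` select exactly the set `U`. -/
noncomputable def poissonWeight {n : ℕ} (U : Finset (Fin n)) (p : Fin n → ℝ) : ℝ :=
  (∏ i ∈ U, p i) * ∏ i ∈ Uᶜ, (1 - p i)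

section
variable {n k : ℕ} {p q : Fin n → ℝ} {U V A B : Finset (Fin n)}

lemma poissonWeight_nonneg (hp : p ∈ cube n) (U : Finset (Fin n)) : 0 ≤ poissonWeight U p :=
  mul_nonneg (prod_nonneg fun i _ => (hp i).1) (prod_nonneg fun i _ => sub_nonneg.2 (hp i).2)

lemma poissonWeight_le_one (hp : p ∈ cube n) (U : Finset (Fin n)) : poissonWeight U p ≤ 1 :=
  mul_le_one₀ (prod_le_one (fun i _ => (hp i).1) fun i _ => (hp i).2)
    (prod_nonneg fun i _ => sub_nonneg.2 (hp i).2)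
    (prod_le_one (fun i _ => sub_nonneg.2 (hp i).2) fun i _ => sub_le_self _ (hp i).1)

lemma poissonWeight_eU_self (U : Finset (Fin n)) : poissonWeight U (eU U) = 1 := by
  rw [poissonWeight, prod_eq_one fun i hi => by simp [eU, hi],
    prod_eq_one fun i hi => by simp [eU, mem_compl.mp hi], mul_one]

lemma poissonWeight_eU_of_not_subset (h : ¬U ⊆ V) : poissonWeight U (eU V) = 0 := by
  obtain ⟨i, hiU, hiV⟩ := not_subset.mp h
  rw [poissonWeight, prod_eq_zero hiU (by simp [eU, hiV]), zero_mul]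

lemma gSampford_eq (n k : ℕ) (U : Finset (Fin n)) (p : Fin n → ℝ) :
    gSampford n k U p = poissonWeight U p * (∑ i ∈ Uᶜ, p i) / (n - k) := by
  rw [gSampford, poissonWeight]
  ring

lemma gSampford_nonneg (hkn : k ≤ n) (hp : p ∈ cube n) (U : Finset (Fin n)) :
    0 ≤ gSampford n k U p := by
  rw [gSampford_eq]
  have := poissonWeight_nonneg hp U
  have : 0 ≤ ∑ i ∈ Uᶜ, p i := sum_nonneg fun i _ => (hp i).1
  have : (0 : ℝ) ≤ n - k := sub_nonneg.2 (by exact_mod_cast hkn)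
  positivity

lemma gSampford_le_sumg (hp : p ∈ Ksimplex n k) (hkn : k ≤ n) (hU : U.card = k) :
    gSampford n k U p ≤ sumg n k p :=
  single_le_sum (fun V _ => gSampford_nonneg hkn hp.1 V) (mem_powersetCard_univ.mpr hU)

lemma eq_eU_of_sum_compl_eq_zero (hp : p ∈ Ksimplex n k) (hU : U.card = k)
    (h : ∑ i ∈ Uᶜ, p i = 0) : p = eU U := by
  have h0 : ∀ i ∈ Uᶜ, p i = 0 := (sum_eq_zero_iff_of_nonneg fun i _ => (hp.1 i).1).mp h
  have hsum : ∑ i ∈ U, p i = ∑ i ∈ U, (1 : ℝ) := by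
    rw [sum_const, hU, nsmul_one]
    linarith [sum_add_sum_compl U p, hp.2]
  have h1 : ∀ i ∈ U, p i = 1 := (sum_eq_sum_iff_of_le fun i _ => (hp.1 i).2).mp hsum
  funext i
  by_cases hi : i ∈ U
  · simp [eU, hi, h1 i hi]
  · simp [eU, hi, h0 i (mem_compl.mpr hi)]

lemma gSampford_le_of_not_subset (hkn : k ≤ n) (hp : p ∈ Ksimplex n k) (hVU : ¬V ⊆ U) :
    gSampford n k V p ≤ k * (∑ i ∈ Uᶜ, p i) / (n - k) := by
  obtain ⟨j, hjV, hjU⟩ := not_subset.mp hVU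
  have hprod : ∏ i ∈ V, p i ≤ p j := by
    rw [← mul_prod_erase V p hjV]
    exact mul_le_of_le_one_right (hp.1 j).1
      (prod_le_one (fun i _ => (hp.1 i).1) fun i _ => (hp.1 i).2)
  have hweight : poissonWeight V p ≤ ∑ i ∈ Uᶜ, p i :=
    calc poissonWeight V p ≤ ∏ i ∈ V, p i :=
          mul_le_of_le_one_right (prod_nonneg fun i _ => (hp.1 i).1)
            (prod_le_one (fun i _ => sub_nonneg.2 (hp.1 i).2) fun i _ => sub_le_self _ (hp.1 i).1)
      _ ≤ p j := hprod
      _ ≤ ∑ i ∈ Uᶜ, p i := single_le_sum (fun i _ => (hp.1 i).1) (mem_compl.mpr hjU)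
  have hsum : ∑ i ∈ Vᶜ, p i ≤ k :=
    hp.2 ▸ sum_le_univ_sum_of_nonneg fun i => (hp.1 i).1
  rw [gSampford_eq, mul_comm (k : ℝ)]
  gcongr
  · exact sub_nonneg.2 (by exact_mod_cast hkn)
  · exact sum_nonneg fun i _ => (hp.1 i).1
  · exact sum_nonneg fun i _ => (hp.1 i).1

lemma poissonWeight_mul_sumg_le (hk : 1 ≤ k) (hkn : k ≤ n) (hp : p ∈ Ksimplex n k)
    (hU : U.card = k) :
    poissonWeight U p * sumg n k p ≤ n.choose k * k * gSampford n k U p := by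
  have hterm : ∀ V ∈ powersetCard k (univ : Finset (Fin n)),
      poissonWeight U p * gSampford n k V p ≤ k * gSampford n k U p := by
    intro V hV
    by_cases hVU : V = U
    · subst hVU
      have hk' : (1 : ℝ) ≤ k := by exact_mod_cast hk
      have := gSampford_nonneg hkn hp.1 V
      calc poissonWeight V p * gSampford n k V p ≤ 1 * gSampford n k V p := by
            gcongr; exact poissonWeight_le_one hp.1 V
        _ ≤ k * gSampford n k V p := by gcongr
    · have hVU' : ¬V ⊆ U := fun h =>
        hVU (eq_of_subset_of_card_le h (by rw [hU, (mem_powersetCard_univ.mp hV)]))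
      calc poissonWeight U p * gSampford n k V p
          ≤ poissonWeight U p * (k * (∑ i ∈ Uᶜ, p i) / (n - k)) :=
            mul_le_mul_of_nonneg_left (gSampford_le_of_not_subset hkn hp hVU')
              (poissonWeight_nonneg hp.1 U)
        _ = k * gSampford n k U p := by rw [gSampford_eq]; ring
  calc poissonWeight U p * sumg n k p
      = ∑ V ∈ powersetCard k univ, poissonWeight U p * gSampford n k V p := mul_sum _ _ _
    _ ≤ ∑ V ∈ powersetCard k (univ : Finset (Fin n)), k * gSampford n k U p :=
        sum_le_sum hterm
    _ = n.choose k * k * gSampford n k U p := by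
        rw [sum_const, card_powersetCard, card_univ, Fintype.card_fin, nsmul_eq_mul, mul_assoc]

lemma poissonWeight_le_fbar (hk : 1 ≤ k) (hkn : k < n) (hp : p ∈ Ksimplex n k)
    (hU : U.card = k) :
    poissonWeight U p ≤ n.choose k * k * fbar n k U p := by
  have hNk : (1 : ℝ) ≤ n.choose k * k :=
    one_le_mul_of_one_le_of_one_le (by exact_mod_cast Nat.choose_pos hkn.le) (by exact_mod_cast hk)
  unfold fbar
  split_ifs with hpU hvertex
  · linarith [poissonWeight_le_one hp.1 U]
  · obtain ⟨V, hV, rfl⟩ := hvertex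
    rw [poissonWeight_eU_of_not_subset, mul_zero]
    exact fun h => hpU (by rw [eq_of_subset_of_card_le h (hV.trans hU.symm).le])
  · rcases (poissonWeight_nonneg hp.1 U).eq_or_lt with h0 | hpos
    · rw [← h0]
      exact mul_nonneg (by positivity) (div_nonneg (gSampford_nonneg hkn.le hp.1 U)
        (sum_nonneg fun V _ => gSampford_nonneg hkn.le hp.1 V))
    · have hsum : 0 < ∑ i ∈ Uᶜ, p i := (sum_nonneg fun i _ => (hp.1 i).1).lt_of_ne'
        fun h => hpU (eq_eU_of_sum_compl_eq_zero hp hU h)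
      have hg : 0 < gSampford n k U p := by
        have : (0 : ℝ) < n - k := sub_pos.2 (by exact_mod_cast hkn)
        rw [gSampford_eq]
        positivity
      have hs : 0 < sumg n k p := hg.trans_le (gSampford_le_sumg hp hkn.le hU)
      rw [mul_div_assoc', le_div_iff₀ hs]
      exact poissonWeight_mul_sumg_le hk hkn.le hp hU

lemma poissonWeight_pos_of_fbar_pos (hq : q ∈ cube n) (h : 0 < fbar n k U q) :
    0 < poissonWeight U q := by
  unfold fbar at h
  split_ifs at h with hqU
  · rw [hqU, poissonWeight_eU_self]
    exact one_pos
  · exact absurd h (lt_irrefl 0)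
  · refine (poissonWeight_nonneg hq U).lt_of_ne' fun h0 => h.ne' ?_
    rw [gSampford_eq, h0, zero_mul, zero_div, zero_div]

lemma disjoint_and_subset_of_poissonWeight_pos (hq : q ∈ face A B)
    (hpos : 0 < poissonWeight U q) : Disjoint A U ∧ B ⊆ U := by
  obtain ⟨hU, hUc⟩ := mul_ne_zero_iff.mp hpos.ne'
  refine ⟨disjoint_left.mpr fun i hiA hiU => prod_ne_zero_iff.mp hU i hiU (hq.1 i hiA),
    fun i hiB => ?_⟩
  by_contra hiU
  exact prod_ne_zero_iff.mp hUc i (mem_compl.mpr hiU) (by rw [hq.2.1 i hiB, sub_self])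

lemma facePoly_le_poissonWeight (hp : p ∈ cube n) (hAU : Disjoint A U) (hBU : B ⊆ U) :
    facePoly A B p ≤ poissonWeight U p := by
  have hS : (A ∪ B)ᶜ = (U \ B) ∪ (Uᶜ \ A) := by
    ext i
    have := @disjoint_left.mp hAU i
    have := @hBU i
    simp only [mem_compl, mem_union, mem_sdiff]
    tauto
  have hdisj : Disjoint (U \ B) (Uᶜ \ A) :=
    disjoint_left.mpr fun i hi hi' => (mem_compl.mp (mem_sdiff.mp hi').1) (mem_sdiff.mp hi).1
  have hx0 (i : Fin n) : 0 ≤ p i * (1 - p i) := mul_nonneg (hp i).1 (sub_nonneg.2 (hp i).2)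
  have hA : 0 ≤ ∏ i ∈ A, (1 - p i) := prod_nonneg fun i _ => sub_nonneg.2 (hp i).2
  have hB : 0 ≤ ∏ i ∈ B, p i := prod_nonneg fun i _ => (hp i).1
  calc facePoly A B p
      = (∏ i ∈ A, (1 - p i)) * ((∏ i ∈ U \ B, p i * (1 - p i)) *
          ∏ i ∈ Uᶜ \ A, p i * (1 - p i)) * ∏ i ∈ B, p i := by
        rw [facePoly, hS, prod_union hdisj]
    _ ≤ (∏ i ∈ A, (1 - p i)) * ((∏ i ∈ U \ B, p i) * ∏ i ∈ Uᶜ \ A, (1 - p i)) *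
          ∏ i ∈ B, p i := by
        gcongr with i _ i _
        · exact prod_nonneg fun i _ => hx0 i
        · exact prod_nonneg fun i _ => (hp i).1
        · exact fun i _ => hx0 i
        · exact mul_le_of_le_one_right (hp i).1 (sub_le_self _ (hp i).1)
        · exact fun i _ => hx0 i
        · exact mul_le_of_le_one_left (sub_nonneg.2 (hp i).2) (hp i).2
    _ = poissonWeight U p := by
        rw [poissonWeight, ← prod_sdiff hBU,
          ← prod_sdiff (subset_compl_iff_disjoint_right.mpr hAU)]
        ring

end

theorem stmt15 (n k : ℕ) (hk : 1 ≤ k) (hkn : k < n)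
    (U : Finset (Fin n)) (hU : U.card = k) :
    PolyBoundedOn (Ksimplex n k) (fbar n k U) := by
  have hNk : (0 : ℝ) < n.choose k * k := by
    have := Nat.choose_pos hkn.le
    have : 0 < k := hk
    positivity
  refine ⟨1, 1 / (n.choose k * k), by positivity, ?_⟩
  rintro A B - ⟨q, ⟨hqK, hqF⟩, hq⟩ p hp
  obtain ⟨hAU, hBU⟩ :=
    disjoint_and_subset_of_poissonWeight_pos hqF (poissonWeight_pos_of_fbar_pos hqK.1 hq)
  calc 1 / (n.choose k * k) * facePoly A B p ^ 1
      ≤ 1 / (n.choose k * k) * poissonWeight U p := by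
        rw [pow_one]
        gcongr
        exact facePoly_le_poissonWeight hp.1 hAU hBU
    _ ≤ fbar n k U p := by
        rw [one_div_mul_eq_div, div_le_iff₀ hNk, mul_comm]
        exact poissonWeight_le_fbar hk hkn hp hU
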